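/- Let X be a separable geodesic Gromov δ-hyperbolic space satisfying (BA) and let ξ ≠ η ∈ ∂X. Then with K(δ, ξ, η) := 2⟨ξ,η⟩_{x₀} + 4δ, for every isometry g of X: max{h_ξ(gx₀), h_η(gx₀)} ≤ d(gx₀, x₀) ≤ max{h_ξ(gx₀), h_η(gx₀)} + K(δ, ξ, η). -/
import Mathlib


open Filter Topology MeasureTheory TopologicalSpace ENNReal

noncomputable section

namespace Paper

variable {X : Type*} [MetricSpace X]


/-- The Gromov product `⟨x,z⟩_y`. -/
def gp (x z y : X) : ℝ := (dist x y + dist z y - dist x z) / 2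

/-- `X` is Gromov `δ`-hyperbolic: the 4-point condition. -/
def IsHyperbolic (X : Type*) [MetricSpace X] (δ : ℝ) : Prop :=
  ∀ x y z w : X, gp x z w ≥ min (gp x y w) (gp y z w) - δ

/-- `X` is a geodesic metric space. -/
def IsGeodesic (X : Type*) [MetricSpace X] : Prop :=
  ∀ x y : X, ∃ γ : ℝ → X, γ 0 = x ∧ γ (dist x y) = y ∧
    ∀ s ∈ Set.Icc (0:ℝ) (dist x y), ∀ t ∈ Set.Icc (0:ℝ) (dist x y),
      dist (γ s) (γ t) = |s - t|

/-- A Gromov sequence (a sequence converging to infinity). -/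
def IsGromovSeq (x₀ : X) (u : ℕ → X) : Prop :=
  Tendsto (fun p : ℕ × ℕ => gp (u p.1) (u p.2) x₀) atTop atTop

/-- Equivalence of Gromov sequences. -/
def GromovEquiv (x₀ : X) (u v : ℕ → X) : Prop :=
  Tendsto (fun n => gp (u n) (v n) x₀) atTop atTop

/-- The type of Gromov sequences based at `x₀`. -/
def GromovSeq (x₀ : X) := {u : ℕ → X // IsGromovSeq x₀ u}

/-- The relation defining the Gromov boundary. -/
def bRel (x₀ : X) (u v : GromovSeq x₀) : Prop := GromovEquiv x₀ u.1 v.1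

/-- The Gromov boundary `∂X`: equivalence classes of Gromov sequences. -/
def GromovBoundary (x₀ : X) := Quot (bRel x₀)

/-- `Bord X = X ∪ ∂X`. -/
def Bord (x₀ : X) := X ⊕ GromovBoundary x₀

/-- The extension of the Gromov product to `Bord X`, with values in `EReal`. -/
def egp (x₀ : X) : Bord x₀ → Bord x₀ → X → EReal
  | .inl x, .inl y, z => ((gp x y z : ℝ) : EReal)
  | .inl x, .inr η, z => sInf {t : EReal | ∃ v : GromovSeq x₀, Quot.mk (bRel x₀) v = η ∧
      t = liminf (fun n => ((gp x (v.1 n) z : ℝ) : EReal)) atTop}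
  | .inr ξ, .inl y, z => sInf {t : EReal | ∃ u : GromovSeq x₀, Quot.mk (bRel x₀) u = ξ ∧
      t = liminf (fun n => ((gp (u.1 n) y z : ℝ) : EReal)) atTop}
  | .inr ξ, .inr η, z => sInf {t : EReal | ∃ u v : GromovSeq x₀,
      Quot.mk (bRel x₀) u = ξ ∧ Quot.mk (bRel x₀) v = η ∧
      t = liminf (fun p : ℕ × ℕ => ((gp (u.1 p.1) (v.1 p.2) z : ℝ) : EReal)) atTop}

/-- The visual quasi-metric `ρ_b(ξ,η) = b^{-⟨ξ,η⟩_{x₀}}`. -/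
def rho (x₀ : X) (b : ℝ) (ξ η : Bord x₀) : ℝ :=
  if egp x₀ ξ η x₀ = ⊤ then 0 else b ^ (-(egp x₀ ξ η x₀).toReal)

/-- The `ρ_b`-length of a chain. -/
def chainSum (x₀ : X) (b : ℝ) (l : List (Bord x₀)) : ℝ :=
  ((l.zip l.tail).map fun p => rho x₀ b p.1 p.2).sum

/-- `D̄_b`: the infimum of `ρ_b`-lengths of chains joining two points of `Bord X`. -/
def Dbar (x₀ : X) (b : ℝ) (ξ η : Bord x₀) : ℝ :=
  sInf {s : ℝ | ∃ l : List (Bord x₀), l.head? = some ξ ∧ l.getLast? = some η ∧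
    s = chainSum x₀ b l}

/-- The metric `D_b` on `Bord X`. -/
def Db (x₀ : X) (b : ℝ) : Bord x₀ → Bord x₀ → ℝ
  | .inl x, .inl y => min (Real.log b * dist x y) (Dbar x₀ b (.inl x) (.inl y))
  | ξ, η => Dbar x₀ b ξ η


lemma gp_isom (g : X ≃ᵢ X) (x y z : X) : gp (g x) (g y) z = gp x y (g.symm z) := by
  have h1 : dist x (g.symm z) = dist (g x) z := by
    rw [← g.symm.dist_eq (g x) z, g.symm_apply_apply]
  have h2 : dist y (g.symm z) = dist (g y) z := by
    rw [← g.symm.dist_eq (g y) z, g.symm_apply_apply]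
  have h3 : dist (g x) (g y) = dist x y := g.dist_eq x y
  simp only [gp, h1, h2, h3]

lemma gp_base (x y z w : X) : gp x y z - dist w z ≤ gp x y w := by
  have h1 := dist_triangle x w z
  have h2 := dist_triangle y w z
  have h3 := dist_comm w z
  simp only [gp]
  nlinarith [dist_nonneg (x := x) (y := w)]

lemma isGromovSeq_isom (x₀ : X) (g : X ≃ᵢ X) {u : ℕ → X} (hu : IsGromovSeq x₀ u) :
    IsGromovSeq x₀ fun n => g (u n) := by
  have key : ∀ p : ℕ × ℕ,
      gp (u p.1) (u p.2) x₀ + -(dist (g.symm x₀) x₀) ≤ gp (g (u p.1)) (g (u p.2)) x₀ := by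
    intro p
    rw [gp_isom]
    have := gp_base (u p.1) (u p.2) x₀ (g.symm x₀)
    have hd : dist x₀ (g.symm x₀) = dist (g.symm x₀) x₀ := dist_comm _ _
    linarith [gp_base (u p.1) (u p.2) x₀ (g.symm x₀)]
  exact tendsto_atTop_mono key (tendsto_atTop_add_const_right atTop _ hu)

lemma gromovEquiv_isom (x₀ : X) (g : X ≃ᵢ X) {u v : ℕ → X} (huv : GromovEquiv x₀ u v) :
    GromovEquiv x₀ (fun n => g (u n)) fun n => g (v n) := by
  have key : ∀ n : ℕ,
      gp (u n) (v n) x₀ + -(dist (g.symm x₀) x₀) ≤ gp (g (u n)) (g (v n)) x₀ := by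
    intro n
    rw [gp_isom]
    linarith [gp_base (u n) (v n) x₀ (g.symm x₀)]
  exact tendsto_atTop_mono key (tendsto_atTop_add_const_right atTop _ huv)

/-- The action of an isometry on the Gromov boundary. -/
def bMap (x₀ : X) (g : X ≃ᵢ X) : GromovBoundary x₀ → GromovBoundary x₀ :=
  Quot.map (fun u : GromovSeq x₀ => (⟨fun n => g (u.1 n), isGromovSeq_isom x₀ g u.2⟩ : GromovSeq x₀))
    (fun _ _ h => gromovEquiv_isom x₀ g h)

/-- The action of an isometry on `Bord X`. -/
def bordMap (x₀ : X) (g : X ≃ᵢ X) : Bord x₀ → Bord x₀ :=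
  Sum.map (fun x => g x) (bMap x₀ g)


/-- The metric `d_G` on the isometry group. -/
def dG (x₀ : X) (b : ℝ) (g₁ g₂ : X ≃ᵢ X) : ℝ :=
  max (⨆ ξ : Bord x₀, Db x₀ b (bordMap x₀ g₁ ξ) (bordMap x₀ g₂ ξ))
      (⨆ ξ : Bord x₀, Db x₀ b (bordMap x₀ g₁.symm ξ) (bordMap x₀ g₂.symm ξ))

/-- The isometry group of `X`, as a type tagged by the basepoint `x₀` and the
parameter `b`, carrying the topology induced by the metric `d_G` and its Borel
σ-algebra. -/
def IsomG (X : Type*) [MetricSpace X] (x₀ : X) (b : ℝ) : Type _ := X ≃ᵢ X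

variable {x₀ : X} {b : ℝ}

/-- The underlying isometry. -/
def IsomG.toE (g : IsomG X x₀ b) : X ≃ᵢ X := g

instance : Group (IsomG X x₀ b) := inferInstanceAs (Group (X ≃ᵢ X))

/-- The topology on the isometry group generated by the `d_G`-balls (for a genuine
metric this is the metric topology). -/
instance : TopologicalSpace (IsomG X x₀ b) :=
  TopologicalSpace.generateFrom
    {U | ∃ (g : IsomG X x₀ b) (r : ℝ), U = {g' : IsomG X x₀ b | dG x₀ b g.toE g'.toE < r}}

instance : MeasurableSpace (IsomG X x₀ b) := borel (IsomG X x₀ b)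

/-- `μ` is a compactly supported Borel probability measure with support inside the
set `S`. -/
def ProbOn (S : Set (IsomG X x₀ b)) (μ : Measure (IsomG X x₀ b)) : Prop :=
  IsProbabilityMeasure μ ∧
    ∃ K : Set (IsomG X x₀ b), IsCompact K ∧ K ⊆ S ∧ μ Kᶜ = 0

/-- The set `G_λ = {g ∈ G : b^{d(gx₀,x₀)} < λ}`. -/
def Glam (G : Subgroup (IsomG X x₀ b)) (lam : ℝ) : Set (IsomG X x₀ b) :=
  {g : IsomG X x₀ b | g ∈ G ∧ b ^ dist (g.toE x₀) x₀ < lam}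

/-- Convolution of measures on the isometry group. -/
def conv (μ ν : Measure (IsomG X x₀ b)) : Measure (IsomG X x₀ b) :=
  Measure.map (fun p : IsomG X x₀ b × IsomG X x₀ b => p.1 * p.2) (μ.prod ν)

/-- Convolution powers `μⁿ` (with `μ⁰ = δ_id`). -/
def convPow (μ : Measure (IsomG X x₀ b)) : ℕ → Measure (IsomG X x₀ b)
  | 0 => Measure.dirac 1
  | n + 1 => conv μ (convPow μ n)

/-- `HasDrift μ ℓ`: the drift `ℓ(μ) = lim (1/n) ∫ d(gx₀, x₀) dμⁿ(g)` exists and equals `ℓ`. -/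
def HasDrift (μ : Measure (IsomG X x₀ b)) (ℓ : ℝ) : Prop :=
  Tendsto (fun n : ℕ => (∫ g : IsomG X x₀ b, dist (g.toE x₀) x₀ ∂(convPow μ n)) / n)
    atTop (𝓝 ℓ)

/-- A bounded Borel function with `α`-Hölder constant (w.r.t. `d_G`) at most 1. -/
def Holder1 (α : ℝ) (φ : IsomG X x₀ b → ℝ) : Prop :=
  Measurable φ ∧ (∃ C : ℝ, ∀ g, |φ g| ≤ C) ∧
    ∀ g g' : IsomG X x₀ b, |φ g - φ g'| ≤ dG x₀ b g.toE g'.toE ^ α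

/-- The `α`-Hölder Wasserstein distance `W_α`. -/
def Wass (α : ℝ) (μ ν : Measure (IsomG X x₀ b)) : ℝ :=
  sSup {t : ℝ | ∃ φ : IsomG X x₀ b → ℝ, Holder1 α φ ∧
    t = |(∫ g, φ g ∂μ) - ∫ g, φ g ∂ν|}

/-- The function `h_x = d(·,x) - d(x,x₀)`. -/
def hfun (x₀ x : X) : X → ℝ := fun z => dist z x - dist x x₀

/-- The horofunction compactification: the closure of `{h_x : x ∈ X}` in the topology of
pointwise convergence. -/
def Xh (x₀ : X) : Set (X → ℝ) := closure (Set.range (hfun x₀))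

/-- The infinite part `X^h_∞` of the horofunction compactification. -/
def XhInf (x₀ : X) : Set (X → ℝ) := {h ∈ Xh x₀ | ¬ BddBelow (Set.range h)}

/-- The action of isometries on horofunctions: `(g·h)(z) = h(g⁻¹z) - h(g⁻¹x₀)`. -/
def horoAct (x₀ : X) (g : X ≃ᵢ X) (h : X → ℝ) : X → ℝ :=
  fun z => h (g.symm z) - h (g.symm x₀)

/-- `μ` is irreducible: no horofunction is fixed by `μ`-almost every `g`. -/
def IrredMeasure (μ : Measure (IsomG X x₀ b)) : Prop :=
  ¬ ∃ h ∈ Xh x₀, ∀ᵐ g ∂μ, horoAct x₀ (IsomG.toE g) h = h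

/-- The Gromov boundary, tagged by `b`, carrying the visual topology generated by the
`D̄_b`-balls and its Borel σ-algebra. -/
def Bdry (x₀ : X) (b : ℝ) := GromovBoundary x₀

def Bdry.toB (ξ : Bdry x₀ b) : GromovBoundary x₀ := ξ

def Bdry.ofB (x₀ : X) (b : ℝ) (ξ : GromovBoundary x₀) : Bdry x₀ b := ξ

instance : TopologicalSpace (Bdry x₀ b) :=
  TopologicalSpace.generateFrom
    {U | ∃ (ξ : Bdry x₀ b) (r : ℝ),
      U = {η : Bdry x₀ b | Dbar x₀ b (Sum.inr ξ.toB) (Sum.inr η.toB) < r}}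

instance : MeasurableSpace (Bdry x₀ b) := borel (Bdry x₀ b)

/-- The action of `g⁻¹` on the boundary (the convention used for stationary measures). -/
def bdryAct (g : IsomG X x₀ b) (ξ : Bdry x₀ b) : Bdry x₀ b :=
  Bdry.ofB x₀ b (bMap x₀ (IsomG.toE g).symm ξ.toB)

/-- `ν` is `μ`-stationary for the action `(g,ξ) ↦ g⁻¹ξ` of `G` on `∂X`. -/
def Stationary (μ : Measure (IsomG X x₀ b)) (ν : Measure (Bdry x₀ b)) : Prop :=
  μ.bind (fun g => Measure.map (bdryAct g) ν) = ν

/-- The Markov operator `(Q_μ f)(ξ) = ∫ f(g⁻¹ξ) dμ(g)`. -/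
def Qop (μ : Measure (IsomG X x₀ b)) (f : Bdry x₀ b → ℝ) : Bdry x₀ b → ℝ :=
  fun ξ => ∫ g : IsomG X x₀ b, f (bdryAct g ξ) ∂μ

/-- Iterates of the Markov operator. -/
def QopIter (μ : Measure (IsomG X x₀ b)) (f : Bdry x₀ b → ℝ) : ℕ → (Bdry x₀ b → ℝ)
  | 0 => f
  | n + 1 => Qop μ (QopIter μ f n)

/-- The `α`-Hölder constant `υ_α(f)` of a function on the boundary (valued in `ℝ≥0∞`),
w.r.t. the visual metric `D_b = D̄_b` on `∂X`. -/
def holdC (α : ℝ) (f : Bdry x₀ b → ℝ) : ℝ≥0∞ :=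
  ⨆ (p : Bdry x₀ b × Bdry x₀ b) (_ : p.1 ≠ p.2),
    ENNReal.ofReal (|f p.1 - f p.2| / Dbar x₀ b (Sum.inr p.1.toB) (Sum.inr p.2.toB) ^ α)

/-- `f` belongs to the Banach algebra `H_α(∂X)` of bounded Borel boundary Hölder
continuous functions. -/
def MemHolder (α : ℝ) (f : Bdry x₀ b → ℝ) : Prop :=
  Measurable f ∧ (∃ C : ℝ, ∀ ξ, |f ξ| ≤ C) ∧ holdC α f ≠ ⊤

/-- The average Hölder constant `k_α^n(μ)` (valued in `ℝ≥0∞`). -/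
def kcoef (α : ℝ) (μ : Measure (IsomG X x₀ b)) (n : ℕ) : ℝ≥0∞ :=
  ⨆ (p : Bdry x₀ b × Bdry x₀ b) (_ : p.1 ≠ p.2),
    ENNReal.ofReal (∫ g : IsomG X x₀ b,
      (Dbar x₀ b (Sum.inr (bdryAct g p.1).toB) (Sum.inr (bdryAct g p.2).toB) /
        Dbar x₀ b (Sum.inr p.1.toB) (Sum.inr p.2.toB)) ^ α ∂(convPow μ n))

/-- The local-minimum map and its inverse witness the basic assumption (BA): `φ` is a
`G`-equivariant homeomorphism from `X^h_∞` onto `∂X` sending a horofunction to the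
equivalence class of any sequence along which it tends to `-∞`. -/
structure BasicAssumption (x₀ : X) (b : ℝ) (lm : (X → ℝ) → Bdry x₀ b)
    (hinv : Bdry x₀ b → (X → ℝ)) : Prop where
  localMin : ∀ h ∈ XhInf x₀, ∀ y : ℕ → X,
    Tendsto (fun n => h (y n)) atTop atBot →
      ∃ hy : IsGromovSeq x₀ y, (lm h).toB = Quot.mk (bRel x₀) (⟨y, hy⟩ : GromovSeq x₀)
  contOn : ContinuousOn lm (XhInf x₀)
  inv_mem : ∀ ξ : Bdry x₀ b, hinv ξ ∈ XhInf x₀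
  left_inv : ∀ h ∈ XhInf x₀, hinv (lm h) = h
  right_inv : ∀ ξ : Bdry x₀ b, lm (hinv ξ) = ξ
  cont_inv : Continuous hinv

/-- The horofunction `h_ξ` associated to a point of `Bord X` (for `ξ ∈ X` this is `h_x`,
for `ξ ∈ ∂X` it is the horofunction corresponding to `ξ` under (BA)). -/
def hB (x₀ : X) (b : ℝ) (hinv : Bdry x₀ b → (X → ℝ)) : Bord x₀ → (X → ℝ)
  | .inl x => hfun x₀ x
  | .inr ξ => hinv (Bdry.ofB x₀ b ξ)

/-- `P` is the product measure `μ^ℕ` on `Ω = G^ℕ`. -/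
def IsProductMeasure (μ : Measure (IsomG X x₀ b)) (P : Measure (ℕ → IsomG X x₀ b)) : Prop :=
  IsProbabilityMeasure P ∧
    ∀ (n : ℕ) (E : Fin n → Set (IsomG X x₀ b)), (∀ i, MeasurableSet (E i)) →
      P {ω | ∀ i : Fin n, ω i ∈ E i} = ∏ i : Fin n, μ (E i)

/-- `ωⁿ = g₀g₁⋯g_{n-1}`. -/
def prodN (ω : ℕ → IsomG X x₀ b) (n : ℕ) : IsomG X x₀ b :=
  ((List.range n).map ω).prod



/-! ### Auxiliary lemmas for Statement 7 -/

lemma gp_comm (x y z : X) : gp x y z = gp y x z := by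
  rw [gp, gp, dist_comm y x]; ring

lemma abs_le_of_mem_Xh {x₀ : X} {h : X → ℝ} (hh : h ∈ Xh x₀) (z : X) :
    |h z| ≤ dist z x₀ := by
  have hsub : Xh x₀ ⊆ {f : X → ℝ | ∀ z, f z ∈ Set.Icc (-(dist z x₀)) (dist z x₀)} := by
    apply closure_minimal
    · rintro f ⟨x, rfl⟩ z
      rw [Set.mem_Icc, ← abs_le]
      have : |dist z x - dist x₀ x| ≤ dist z x₀ := abs_dist_sub_le z x₀ x
      rw [dist_comm x₀ x] at this
      exact this
    · have : {f : X → ℝ | ∀ z, f z ∈ Set.Icc (-(dist z x₀)) (dist z x₀)} =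
        ⋂ z : X, (fun f : X → ℝ => f z) ⁻¹' Set.Icc (-(dist z x₀)) (dist z x₀) := by
        ext f; simp [Set.mem_iInter]
      rw [this]
      exact isClosed_iInter fun z => isClosed_Icc.preimage (continuous_apply z)
  rw [abs_le]
  exact Set.mem_Icc.mp (hsub hh z)

lemma Xh_approx {x₀ : X} {h : X → ℝ} (hh : h ∈ Xh x₀) (a c : X) {ε : ℝ} (hε : 0 < ε) :
    ∃ x : X, |hfun x₀ x a - h a| < ε ∧ |hfun x₀ x c - h c| < ε := by
  have hU : IsOpen ((fun f : X → ℝ => f a) ⁻¹' Metric.ball (h a) ε ∩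
      (fun f : X → ℝ => f c) ⁻¹' Metric.ball (h c) ε) :=
    (Metric.isOpen_ball.preimage (continuous_apply a)).inter
      (Metric.isOpen_ball.preimage (continuous_apply c))
  have hhU : h ∈ (fun f : X → ℝ => f a) ⁻¹' Metric.ball (h a) ε ∩
      (fun f : X → ℝ => f c) ⁻¹' Metric.ball (h c) ε := by
    constructor <;> simp [Metric.mem_ball, hε]
  obtain ⟨f, hfU, x, rfl⟩ := _root_.mem_closure_iff.mp hh _ hU hhU
  refine ⟨x, ?_, ?_⟩
  · have := hfU.1; rwa [Set.mem_preimage, Metric.mem_ball, Real.dist_eq] at this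
  · have := hfU.2; rwa [Set.mem_preimage, Metric.mem_ball, Real.dist_eq] at this

set_option maxHeartbeats 1000000 in
lemma gromovEquiv_refl {x₀ : X} (u : GromovSeq x₀) : GromovEquiv x₀ u.1 u.1 := by
  have hdiag : Tendsto (fun n : ℕ => ((n, n) : ℕ × ℕ)) atTop atTop := by
    rw [← prod_atTop_atTop_eq]
    exact tendsto_id.prodMk tendsto_id
  exact u.2.comp hdiag

lemma gromovEquiv_symm {x₀ : X} {u v : ℕ → X} (h : GromovEquiv x₀ u v) :
    GromovEquiv x₀ v u := by
  have : (fun n => gp (v n) (u n) x₀) = fun n => gp (u n) (v n) x₀ :=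
    funext fun n => gp_comm _ _ _
  unfold GromovEquiv
  rw [this]
  exact h

lemma gromovEquiv_trans {x₀ : X} {δ : ℝ} (hhyp : IsHyperbolic X δ) {u v w : ℕ → X}
    (h1 : GromovEquiv x₀ u v) (h2 : GromovEquiv x₀ v w) : GromovEquiv x₀ u w := by
  have hmin : Tendsto (fun n => min (gp (u n) (v n) x₀) (gp (v n) (w n) x₀)) atTop atTop := by
    rw [tendsto_atTop]
    intro c
    filter_upwards [h1.eventually_ge_atTop c, h2.eventually_ge_atTop c] with n hn1 hn2
    exact le_min hn1 hn2
  have key : ∀ n, min (gp (u n) (v n) x₀) (gp (v n) (w n) x₀) + -δ ≤ gp (u n) (w n) x₀ := by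
    intro n
    have := hhyp (u n) (v n) (w n) x₀
    linarith
  exact tendsto_atTop_mono key (tendsto_atTop_add_const_right atTop _ hmin)

lemma eqvGen_equiv {x₀ : X} {δ : ℝ} (hhyp : IsHyperbolic X δ) {a c : GromovSeq x₀}
    (h : Relation.EqvGen (bRel x₀) a c) : GromovEquiv x₀ a.1 c.1 := by
  induction h with
  | rel a b hab => exact hab
  | refl a => exact gromovEquiv_refl a
  | symm a b _ ih => exact gromovEquiv_symm ih
  | trans a b c _ _ ih1 ih2 => exact gromovEquiv_trans hhyp ih1 ih2

lemma key_estimate {x₀ : X} {δ : ℝ} (hδ0 : 0 ≤ δ) (hhyp : IsHyperbolic X δ) {h : X → ℝ}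
    (hh : h ∈ Xh x₀) (y : GromovSeq x₀) (hyh : ∀ n, h (y.1 n) ≤ -(n : ℝ))
    (u : GromovSeq x₀) (huy : GromovEquiv x₀ u.1 y.1) (w : X) {ε : ℝ} (hε : 0 < ε) :
    ∀ᶠ n in atTop, (dist w x₀ - h w - ε) / 2 - δ ≤ gp (u.1 n) w x₀ := by
  set C : ℝ := (dist w x₀ - h w - ε) / 2 with hC
  obtain ⟨a, ha⟩ := Filter.eventually_atTop.mp (y.2.eventually_ge_atTop (C + 2 * δ))
  set M : ℕ := max a.1 a.2 with hM
  set N : ℕ := max M ⌈C + 2 * δ + ε⌉₊ with hN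
  have hNM : M ≤ N := le_max_left _ _
  have hNr : C + 2 * δ + ε ≤ (N : ℝ) := by
    refine le_trans (Nat.le_ceil _) ?_
    exact_mod_cast Nat.cast_le.mpr (le_max_right M ⌈C + 2 * δ + ε⌉₊)
  have hyN : h (y.1 N) ≤ -(C + 2 * δ + ε) := le_trans (hyh N) (by linarith)
  obtain ⟨x, hxw, hxN⟩ := Xh_approx hh w (y.1 N) hε
  have hgpwx : C ≤ gp w x x₀ := by
    have h1 : hfun x₀ x w - h w < ε := (abs_lt.mp hxw).2
    simp only [gp, hfun] at h1 ⊢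
    linarith
  have hdyN : -(h (y.1 N)) ≤ dist (y.1 N) x₀ := by
    have := abs_le_of_mem_Xh hh (y.1 N)
    have := (abs_le.mp this).1
    linarith
  have hgpNx : C + 2 * δ ≤ gp (y.1 N) x x₀ := by
    have h1 : hfun x₀ x (y.1 N) - h (y.1 N) < ε := (abs_lt.mp hxN).2
    simp only [gp, hfun] at h1 ⊢
    linarith
  obtain ⟨n₁, hn₁⟩ := Filter.eventually_atTop.mp (huy.eventually_ge_atTop (C + 2 * δ))
  refine Filter.eventually_atTop.mpr ⟨max n₁ M, fun n hn => ?_⟩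
  have hnM : M ≤ n := le_trans (le_max_right _ _) hn
  have h1 : C + 2 * δ ≤ gp (u.1 n) (y.1 n) x₀ := hn₁ n (le_trans (le_max_left _ _) hn)
  have h2 : C + 2 * δ ≤ gp (y.1 n) (y.1 N) x₀ := by
    refine ha (n, N) (Prod.le_def.mpr ⟨?_, ?_⟩)
    · exact le_trans (le_max_left _ _) hnM
    · exact le_trans (le_max_right _ _) hNM
  have h3 : C + δ ≤ gp (u.1 n) (y.1 N) x₀ := by
    have := hhyp (u.1 n) (y.1 n) (y.1 N) x₀
    have hm := le_min h1 h2
    linarith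
  have h4 : C ≤ gp (u.1 n) x x₀ := by
    have := hhyp (u.1 n) (y.1 N) x x₀
    have hm := le_min h3 (le_trans (by linarith) hgpNx)
    linarith
  have h5 : C - δ ≤ gp (u.1 n) w x₀ := by
    have := hhyp (u.1 n) x w x₀
    have hxw' : C ≤ gp x w x₀ := by rw [gp_comm]; exact hgpwx
    have hm := le_min h4 hxw'
    linarith
  linarith

lemma exists_rep {x₀ : X} {b : ℝ} (lm : (X → ℝ) → Bdry x₀ b)
    (hinv : Bdry x₀ b → (X → ℝ)) (hBA : BasicAssumption x₀ b lm hinv) (ξ : Bdry x₀ b) :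
    ∃ y : GromovSeq x₀, Quot.mk (bRel x₀) y = ξ.toB ∧ ∀ n, hinv ξ (y.1 n) ≤ -(n : ℝ) := by
  have hmem := hBA.inv_mem ξ
  have hnb : ¬ BddBelow (Set.range (hinv ξ)) := hmem.2
  have hex : ∀ n : ℕ, ∃ p : X, hinv ξ p ≤ -(n : ℝ) := by
    intro n
    obtain ⟨v, ⟨p, rfl⟩, hv⟩ := not_bddBelow_iff.mp hnb (-(n : ℝ))
    exact ⟨p, le_of_lt hv⟩
  choose y hy using hex
  have htend : Tendsto (fun n => hinv ξ (y n)) atTop atBot := by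
    rw [tendsto_atBot]
    intro c
    filter_upwards [Filter.eventually_ge_atTop ⌈-c⌉₊] with n hn
    have h1 : -c ≤ (n : ℝ) := le_trans (Nat.le_ceil _) (by exact_mod_cast hn)
    linarith [hy n]
  obtain ⟨hyG, hquot⟩ := hBA.localMin (hinv ξ) hmem y htend
  rw [hBA.right_inv ξ] at hquot
  exact ⟨⟨y, hyG⟩, hquot.symm, hy⟩

set_option maxHeartbeats 1000000 in
/-- **Comparison of the displacement with horofunctions.** -/
theorem displacement_horofunction_comparison
    {X : Type*} [MetricSpace X] [TopologicalSpace.SeparableSpace X]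
    (x₀ : X) (δ b : ℝ) (hδ : 0 < δ) (hb : 1 < b) (hb2 : b ≤ (2:ℝ) ^ (1/δ))
    (hgeo : IsGeodesic X) (hhyp : IsHyperbolic X δ)
    (lm : (X → ℝ) → Bdry x₀ b) (hinv : Bdry x₀ b → (X → ℝ))
    (hBA : BasicAssumption x₀ b lm hinv)
    (ξ η : Bdry x₀ b) (hne : ξ ≠ η) :
    ∀ g : X ≃ᵢ X,
      max (hinv ξ (g x₀)) (hinv η (g x₀)) ≤ dist (g x₀) x₀ ∧
      dist (g x₀) x₀ ≤ max (hinv ξ (g x₀)) (hinv η (g x₀)) +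
        (2 * (egp x₀ (Sum.inr ξ.toB) (Sum.inr η.toB) x₀).toReal + 4 * δ) := by
  intro g
  set w : X := g x₀ with hw
  have hub : ∀ θ : Bdry x₀ b, hinv θ w ≤ dist w x₀ := fun θ =>
    le_trans (le_abs_self _) (abs_le_of_mem_Xh (hBA.inv_mem θ).1 w)
  refine ⟨max_le (hub ξ) (hub η), ?_⟩
  obtain ⟨y, hyq, hyv⟩ := exists_rep lm hinv hBA ξ
  obtain ⟨z, hzq, hzv⟩ := exists_rep lm hinv hBA η
  set S : Set EReal := {t : EReal | ∃ u v : GromovSeq x₀,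
      Quot.mk (bRel x₀) u = ξ.toB ∧ Quot.mk (bRel x₀) v = η.toB ∧
      t = liminf (fun p : ℕ × ℕ => ((gp (u.1 p.1) (v.1 p.2) x₀ : ℝ) : EReal)) atTop} with hS
  have hPdef : egp x₀ (Sum.inr ξ.toB) (Sum.inr η.toB) x₀ = sInf S := rfl
  set P : EReal := egp x₀ (Sum.inr ξ.toB) (Sum.inr η.toB) x₀ with hP
  set D : ℝ := max (hinv ξ w) (hinv η w) with hD
  -- every element of S is bounded below
  have hA : ∀ ε : ℝ, 0 < ε → ∀ t ∈ S, (((dist w x₀ - D - ε) / 2 - 2 * δ : ℝ) : EReal) ≤ t := by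
    rintro ε hε t ⟨u, v, huq, hvq, rfl⟩
    have huy : GromovEquiv x₀ u.1 y.1 :=
      eqvGen_equiv hhyp (Quot.eq.mp (huq.trans hyq.symm))
    have hvz : GromovEquiv x₀ v.1 z.1 :=
      eqvGen_equiv hhyp (Quot.eq.mp (hvq.trans hzq.symm))
    obtain ⟨n₁, hn₁⟩ := Filter.eventually_atTop.mp
      (key_estimate hδ.le hhyp (hBA.inv_mem ξ).1 y hyv u huy w hε)
    obtain ⟨m₁, hm₁⟩ := Filter.eventually_atTop.mp
      (key_estimate hδ.le hhyp (hBA.inv_mem η).1 z hzv v hvz w hε)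
    refine le_liminf_of_le (by isBoundedDefault) ?_
    refine Filter.eventually_atTop.mpr ⟨(n₁, m₁), fun p hp => ?_⟩
    have h1 := hn₁ p.1 (Prod.le_def.mp hp).1
    have h2 := hm₁ p.2 (Prod.le_def.mp hp).2
    rw [EReal.coe_le_coe_iff]
    have hmin : (dist w x₀ - D - ε) / 2 - δ ≤
        min (gp (u.1 p.1) w x₀) (gp w (v.1 p.2) x₀) := by
      apply le_min
      · refine le_trans ?_ h1
        have := le_max_left (hinv ξ w) (hinv η w)
        rw [hD]; linarith
      · have h2' : (dist w x₀ - hinv η w - ε) / 2 - δ ≤ gp w (v.1 p.2) x₀ := by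
          rw [gp_comm]; exact h2
        refine le_trans ?_ h2'
        have := le_max_right (hinv ξ w) (hinv η w)
        rw [hD]; linarith
    have := hhyp (u.1 p.1) w (v.1 p.2) x₀
    linarith
  have hSne : S.Nonempty := ⟨_, y, z, hyq, hzq, rfl⟩
  have hPle : ∀ ε : ℝ, 0 < ε → (((dist w x₀ - D - ε) / 2 - 2 * δ : ℝ) : EReal) ≤ P := by
    intro ε hε
    rw [hPdef]
    exact le_sInf (hA ε hε)
  have hPtop : P ≠ ⊤ := by
    intro htop
    have ht0 : liminf (fun p : ℕ × ℕ => ((gp (y.1 p.1) (z.1 p.2) x₀ : ℝ) : EReal)) atTop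
        = ⊤ := by
      have hmem : liminf (fun p : ℕ × ℕ => ((gp (y.1 p.1) (z.1 p.2) x₀ : ℝ) : EReal)) atTop
          ∈ S := ⟨y, z, hyq, hzq, rfl⟩
      have h1 : P ≤ liminf (fun p : ℕ × ℕ => ((gp (y.1 p.1) (z.1 p.2) x₀ : ℝ) : EReal)) atTop := by
        rw [hPdef]; exact sInf_le hmem
      rw [htop] at h1
      exact top_le_iff.mp h1
    have hdiag : Tendsto (fun n : ℕ => ((n, n) : ℕ × ℕ)) atTop atTop := by
      rw [← prod_atTop_atTop_eq]
      exact tendsto_id.prodMk tendsto_id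
    have heqv : GromovEquiv x₀ y.1 z.1 := by
      rw [GromovEquiv, tendsto_atTop]
      intro c
      have hc : ((c : ℝ) : EReal) <
          liminf (fun p : ℕ × ℕ => ((gp (y.1 p.1) (z.1 p.2) x₀ : ℝ) : EReal)) atTop := by
        rw [ht0]; exact EReal.coe_lt_top c
      have hev := eventually_lt_of_lt_liminf hc
      filter_upwards [hdiag.eventually hev] with n hn
      exact le_of_lt (EReal.coe_lt_coe_iff.mp hn)
    have h5 : Quot.mk (bRel x₀) y = Quot.mk (bRel x₀) z := Quot.sound heqv
    have h6 : ξ.toB = η.toB := by rw [← hyq, ← hzq]; exact h5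
    exact hne h6
  have hPbot : P ≠ ⊥ := by
    intro hbot
    have := hPle 1 one_pos
    rw [hbot] at this
    exact (not_le.mpr (EReal.bot_lt_coe _)) this
  refine le_of_forall_pos_le_add ?_
  intro ε hε
  have h1 := hPle ε hε
  have h2 : (dist w x₀ - D - ε) / 2 - 2 * δ ≤ P.toReal := by
    have := EReal.toReal_le_toReal h1 (EReal.coe_ne_bot _) hPtop
    rwa [EReal.toReal_coe] at this
  rw [hD] at h2
  linarith

end Paper
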